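/- arXiv:2301.12982 — 6 statements merged into one kernel-verified Lean document; each statement's English description precedes it below -/
import Mathlib

section
/- Let T be a nontrivial finite group, I an infinite index set, G = ∏_{i ∈ I} T, and F a nonprincipal ultrafilter on I. Then the subgroup T_F = {(t_i) ∈ G : {i : t_i = 1} ∈ F} is a proper subgroup of finite index in G that is dense in the product topology on G (where T carries the discrete topology). -/
/-- The subgroup of the product `∀ i, T` determined by an ultrafilter `F` on `I`:
all tuples `(t_i)` such that `{i | t_i = 1} ∈ F`. -/
def ultraSubgroup (I : Type*) (T : Type*) [Group T] (F : Ultrafilter I) :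
    Subgroup (∀ _ : I, T) where
  carrier := {f | {i | f i = 1} ∈ F}
  one_mem' := by
    simp only [Set.mem_setOf_eq, Pi.one_apply]
    exact Filter.univ_mem' fun i => trivial
  mul_mem' := by
    intro a b ha hb
    refine Filter.mem_of_superset (Filter.inter_mem ha hb) ?_
    rintro i ⟨hia, hib⟩
    simp only [Set.mem_setOf_eq] at *
    simp [hia, hib]
  inv_mem' := by
    intro a ha
    refine Filter.mem_of_superset ha ?_
    intro i hi
    simp only [Set.mem_setOf_eq] at *
    simp [hi]

instance ultraSubgroup_normal (I : Type*) (T : Type*) [Group T] (F : Ultrafilter I) :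
    (ultraSubgroup I T F).Normal := by
  constructor
  intro a ha g
  refine Filter.mem_of_superset ha ?_
  intro i hi
  simp only [Set.mem_setOf_eq] at *
  simp [hi]

/-!
Membership in `T_F` only depends on the `F`-germ of a tuple. Since `T` is finite, every tuple
is `F`-almost everywhere equal to one of the constant tuples, which therefore represent all
cosets. A nonprincipal ultrafilter contains every cofinite set, so `T_F` contains all finitely
supported tuples, and these are dense in the product topology: the truncations of `f` to
finite sets of coordinates converge to `f`.
-/

open Filter Function Topology

namespace ultraSubgroup

variable {I T : Type*} [Group T] (F : Ultrafilter I)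

theorem mem_iff {f : I → T} : f ∈ ultraSubgroup I T F ↔ ∀ᶠ i in (F : Filter I), f i = 1 :=
  Iff.rfl

theorem ne_top [Nontrivial T] : ultraSubgroup I T F ≠ ⊤ := by
  obtain ⟨t, ht⟩ := exists_ne (1 : T)
  intro htop
  have hconst : ∀ᶠ _ in (F : Filter I), t = 1 := (mem_iff F).mp (htop ▸ Subgroup.mem_top _)
  obtain ⟨_, hone⟩ := hconst.exists
  exact ht hone

theorem exists_const_mem_coset [Finite T] (f : I → T) :
    ∃ t : T, (fun _ => t)⁻¹ * f ∈ ultraSubgroup I T F := by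
  have hval : ∀ᶠ i in (F : Filter I), ∃ t, f i = t := Eventually.of_forall fun i => ⟨f i, rfl⟩
  obtain ⟨t, ht⟩ := Ultrafilter.eventually_exists_iff.mp hval
  exact ⟨t, ht.mono fun i hi => by simp [hi]⟩

theorem finiteIndex [Finite T] : (ultraSubgroup I T F).FiniteIndex := by
  have hsurj : Surjective fun t : T => (QuotientGroup.mk (fun _ : I => t) :
      (I → T) ⧸ ultraSubgroup I T F) := by
    intro q
    obtain ⟨f, rfl⟩ := QuotientGroup.mk_surjective q
    obtain ⟨t, ht⟩ := exists_const_mem_coset F f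
    exact ⟨t, QuotientGroup.eq.mpr ht⟩
  have : Finite ((I → T) ⧸ ultraSubgroup I T F) := Finite.of_surjective _ hsurj
  exact Subgroup.finiteIndex_of_finite_quotient

theorem mem_of_mulSupport_finite (hF : (F : Filter I) ≤ cofinite) {f : I → T}
    (hf : (mulSupport f).Finite) : f ∈ ultraSubgroup I T F :=
  mem_of_superset (hF hf.compl_mem_cofinite) fun _ hi => notMem_mulSupport.mp hi

end ultraSubgroup

theorem tendsto_piecewise_one_atTop {I T : Type*} [One T] [TopologicalSpace T] [DecidableEq I]
    (f : I → T) : Tendsto (fun s : Finset I => s.piecewise f 1) atTop (𝓝 f) := by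
  refine tendsto_pi_nhds.mpr fun i => tendsto_nhds_of_eventually_eq ?_
  filter_upwards [eventually_ge_atTop {i}] with s hs
  exact s.piecewise_eq_of_mem _ _ (Finset.singleton_subset_iff.mp hs)

theorem dense_setOf_mulSupport_finite {I T : Type*} [One T] [TopologicalSpace T] :
    Dense {f : I → T | (mulSupport f).Finite} := by
  classical
  intro f
  refine mem_closure_of_tendsto (tendsto_piecewise_one_atTop f) (Eventually.of_forall fun s => ?_)
  exact s.finite_toSet.subset fun i hi => by_contra fun his => hi (s.piecewise_eq_of_notMem _ _ his)

theorem stmt_1_general {I : Type*} (T : Type*) [Group T] [Finite T] [Nontrivial T]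
    [TopologicalSpace T]
    (F : Ultrafilter I) (hF : ∀ i : I, F ≠ (pure i : Ultrafilter I)) :
    ultraSubgroup I T F ≠ ⊤ ∧ (ultraSubgroup I T F).FiniteIndex ∧
      Dense (ultraSubgroup I T F : Set (∀ _ : I, T)) := by
  have hcof : (F : Filter I) ≤ cofinite :=
    (F.le_cofinite_or_eq_pure).resolve_right fun ⟨i, hi⟩ => hF i hi
  exact ⟨ultraSubgroup.ne_top F, ultraSubgroup.finiteIndex F,
    dense_setOf_mulSupport_finite.mono fun _ => ultraSubgroup.mem_of_mulSupport_finite F hcof⟩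

/-- For a nontrivial finite group `T`, an infinite set `I`, and a
nonprincipal ultrafilter `F` on `I`, the subgroup `T_F` of `G = ∀ i, T` is a proper
subgroup of finite index which is dense for the product topology (with `T` discrete). -/
theorem stmt_1 {I : Type*} [Infinite I] (T : Type*) [Group T] [Finite T] [Nontrivial T]
    [TopologicalSpace T] [DiscreteTopology T]
    (F : Ultrafilter I) (hF : ∀ i : I, F ≠ (pure i : Ultrafilter I)) :
    ultraSubgroup I T F ≠ ⊤ ∧ (ultraSubgroup I T F).FiniteIndex ∧
      Dense (ultraSubgroup I T F : Set (∀ _ : I, T)) :=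
  stmt_1_general T F hF
end

section
/- Let I be an infinite set and T a nontrivial finite group. Distinct ultrafilters F ≠ F' on I determine distinct subgroups T_F ≠ T_{F'} of the product G = ∏_{i∈I} T. Consequently G has at least 2^(2^|I|) subgroups of finite index. -/
universe u v

open Filter Set

namespace Pospisil

variable {I : Type u} [Infinite I]

/-- The index set on which we build many ultrafilters. -/
abbrev Om (I : Type u) := Finset I × Finset (Finset I)

/-- The independent family of Fichtenholz–Kantorovich. -/
def X (A : Set I) : Set (Om I) := {p | ∃ t ∈ p.2, (↑t : Set I) = ↑p.1 ∩ A}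

/-- Key lemma: the family `X` is independent. -/
lemma key (𝒜 : Finset (Set I)) (S : Set (Set I)) :
    ∃ p : Om I, ∀ A ∈ 𝒜, (A ∈ S → p ∈ X A) ∧ (A ∉ S → p ∉ X A) := by
  classical
  have h1 : ∀ (A B : Set I), A ≠ B → ∃ x, ¬(x ∈ A ↔ x ∈ B) := by
    intro A B hAB
    by_contra h
    push_neg at h
    exact hAB (Set.ext h)
  have : Nonempty I := inferInstance
  set w : Set I × Set I → I := fun q =>
    if h : q.1 ≠ q.2 then Classical.choose (h1 q.1 q.2 h) else Classical.arbitrary I with hw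
  set s : Finset I := (𝒜 ×ˢ 𝒜).image w with hs
  have hsep : ∀ A ∈ 𝒜, ∀ B ∈ 𝒜, (↑s ∩ A : Set I) = ↑s ∩ B → A = B := by
    intro A hA B hB h
    by_contra hAB
    have hx := Classical.choose_spec (h1 A B hAB)
    set x := Classical.choose (h1 A B hAB) with hxdef
    have hxs : x ∈ s := by
      apply Finset.mem_image.mpr
      refine ⟨(A, B), Finset.mk_mem_product hA hB, ?_⟩
      simp [hw, hAB, hxdef]
    have := Set.ext_iff.mp h x
    simp only [Set.mem_inter_iff, Finset.mem_coe, hxs, true_and] at this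
    exact hx this
  refine ⟨(s, (𝒜.filter (· ∈ S)).image (fun A => s.filter (· ∈ A))), fun A hA => ⟨?_, ?_⟩⟩
  · intro hAS
    exact ⟨s.filter (· ∈ A), Finset.mem_image_of_mem _ (Finset.mem_filter.mpr ⟨hA, hAS⟩),
      by simp [Finset.coe_filter]; rfl⟩
  · rintro hAS ⟨t, ht, hteq⟩
    simp only [Finset.mem_image, Finset.mem_filter] at ht
    obtain ⟨B, ⟨hB, hBS⟩, rfl⟩ := ht
    have : (↑s ∩ B : Set I) = ↑s ∩ A := by
      rw [← hteq]; simp [Finset.coe_filter]; rfl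
    exact hAS (hsep B hB A hA this ▸ hBS)

lemma X_injective : Function.Injective (X (I := I)) := by
  intro A B h
  by_contra hAB
  classical
  obtain ⟨p, hp⟩ := key {A, B} {A}
  have hA := hp A (by simp)
  have hB := hp B (by simp)
  have h1 : p ∈ X A := hA.1 rfl
  have h2 : p ∉ X B := hB.2 (by simpa using Ne.symm hAB)
  exact h2 (h ▸ h1)

/-- The family of sets generating the filter attached to `S`. -/
def fam (S : Set (Set I)) : Set (Set (Om I)) :=
  X '' S ∪ (fun A => (X A)ᶜ) '' Sᶜ

lemma fam_neBot (S : Set (Set I)) : (Filter.generate (fam S)).NeBot := by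
  classical
  rw [Filter.generate_neBot_iff]
  intro t hts htfin
  have hfin1 : {A : Set I | X A ∈ t}.Finite :=
    Set.Finite.preimage (Set.injOn_of_injective X_injective) htfin
  have hfin2 : {A : Set I | (X A)ᶜ ∈ t}.Finite := by
    have : Function.Injective (fun A : Set I => (X A)ᶜ) :=
      compl_injective.comp X_injective
    exact Set.Finite.preimage (Set.injOn_of_injective this) htfin
  obtain ⟨p, hp⟩ := key (hfin1.union hfin2).toFinset S
  refine ⟨p, fun u hu => ?_⟩
  rcases hts hu with ⟨A, hAS, rfl⟩ | ⟨A, hAS, rfl⟩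
  · exact (hp A (by simp [Set.Finite.mem_toFinset]; left; exact hu)).1 hAS
  · exact (hp A (by simp [Set.Finite.mem_toFinset]; right; exact hu)).2 hAS

/-- The ultrafilter attached to `S`. -/
noncomputable def U (S : Set (Set I)) : Ultrafilter (Om I) :=
  @Ultrafilter.of _ _ (fam_neBot S)

lemma mem_U {S : Set (Set I)} {A : Set I} (h : A ∈ S) : X A ∈ U S :=
  haveI := fam_neBot S
  Ultrafilter.of_le _ (Filter.mem_generate_of_mem (Or.inl ⟨A, h, rfl⟩))

lemma compl_mem_U {S : Set (Set I)} {A : Set I} (h : A ∉ S) : (X A)ᶜ ∈ U S :=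
  haveI := fam_neBot S
  Ultrafilter.of_le _ (Filter.mem_generate_of_mem (Or.inr ⟨A, h, rfl⟩))

lemma U_injective : Function.Injective (U (I := I)) := by
  have main : ∀ S S' : Set (Set I), ∀ A, A ∈ S → A ∉ S' → U S ≠ U S' := by
    intro S S' A h h' heq
    have h1 : X A ∈ U S := mem_U h
    have h2 : (X A)ᶜ ∈ U S := heq ▸ compl_mem_U h'
    exact (Ultrafilter.compl_mem_iff_notMem.mp h2) h1
  intro S S' heq
  by_contra hne
  obtain ⟨A, hA⟩ : ∃ A, ¬(A ∈ S ↔ A ∈ S') := by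
    by_contra h; push_neg at h; exact hne (Set.ext h)
  have hA' : A ∉ S ↔ A ∈ S' := not_iff.mp hA
  by_cases hAS : A ∈ S
  · exact main S S' A hAS (fun h' => (hA'.mpr h') hAS) heq
  · exact main S' S A (hA'.mp hAS) hAS heq.symm

/-- many ultrafilters -/
lemma exists_embedding : Nonempty (Set (Set I) ↪ Ultrafilter I) := by
  have hcard : (Cardinal.mk (Om I)) = Cardinal.mk I := by
    have h1 : Cardinal.mk (Finset I) = Cardinal.mk I := Cardinal.mk_finset_of_infinite I
    have : Infinite (Finset I) := inferInstance
    have h2 : Cardinal.mk (Finset (Finset I)) = Cardinal.mk I := by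
      rw [Cardinal.mk_finset_of_infinite, h1]
    simp only [Om, Cardinal.mk_prod, Cardinal.lift_id, h1, h2]
    exact Cardinal.mul_eq_self (Cardinal.aleph0_le_mk I)
  obtain ⟨e⟩ := Cardinal.eq.mp hcard
  refine ⟨⟨fun S => (U S).map e, ?_⟩⟩
  intro S S' h
  apply U_injective
  apply Ultrafilter.coe_injective
  have := congrArg (Ultrafilter.map e.symm) h
  simpa [Ultrafilter.map_map, Equiv.symm_comp_self] using this

end Pospisil




open Filter Set

section Aux
variable {I : Type u} (T : Type v) [Group T]

omit [Group T] in
lemma germ_finite [Finite T] (F : Ultrafilter I) : Finite (Filter.Germ (F : Filter I) T) := by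
  apply Finite.of_surjective (fun t : T => ((fun _ => t : I → T) : Filter.Germ (F : Filter I) T))
  intro q
  induction q using Filter.Germ.inductionOn with
  | _ f =>
    have huniv : (⋃ t ∈ (Set.univ : Set T), {i | f i = t}) ∈ F := by
      have : (⋃ t ∈ (Set.univ : Set T), {i | f i = t}) = Set.univ := by
        ext i; simp
      rw [this]; exact Filter.univ_mem
    obtain ⟨t, -, ht⟩ := (Ultrafilter.finite_biUnion_mem_iff Set.finite_univ).mp huniv
    exact ⟨t, (Filter.Germ.coe_eq.mpr ht).symm⟩

lemma ultraSubgroup_eq_ker (F : Ultrafilter I) :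
    ultraSubgroup I T F = (Filter.Germ.coeMulHom (F : Filter I) : (∀ _ : I, T) →* _).ker := by
  ext f
  rw [MonoidHom.mem_ker]
  show {i | f i = 1} ∈ F ↔ (↑f : Filter.Germ (F : Filter I) T) = 1
  rw [← Filter.Germ.coe_one, Filter.Germ.coe_eq]
  exact Iff.rfl

instance ultraSubgroup_finiteIndex [Finite T] (F : Ultrafilter I) :
    (ultraSubgroup I T F).FiniteIndex := by
  haveI := germ_finite T F
  rw [ultraSubgroup_eq_ker]
  infer_instance

lemma ultraSubgroup_injective [Nontrivial T] :
    Function.Injective fun F : Ultrafilter I => ultraSubgroup I T F := by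
  obtain ⟨t₀, ht₀⟩ := exists_ne (1 : T)
  have main : ∀ F F' : Ultrafilter I, ultraSubgroup I T F = ultraSubgroup I T F' →
      ∀ s : Set I, s ∈ F → s ∈ F' := by
    classical
    intro F F' h s hs
    set f : ∀ _ : I, T := fun i => if i ∈ s then 1 else t₀ with hf
    have hset : {i | f i = 1} = s := by
      ext i; by_cases hi : i ∈ s <;> simp [hf, hi, ht₀]
    have h1 : f ∈ ultraSubgroup I T F := by show {i | f i = 1} ∈ F; rw [hset]; exact hs
    have h2 : f ∈ ultraSubgroup I T F' := h ▸ h1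
    have : {i | f i = 1} ∈ F' := h2
    rwa [hset] at this
  intro F F' h
  apply Ultrafilter.coe_injective
  apply Filter.ext
  intro s
  exact ⟨main F F' h s, main F' F h.symm s⟩

end Aux

/-- Distinct ultrafilters on an infinite set `I` determine distinct
subgroups `T_F` of `G = ∀ i, T` (for `T` a nontrivial finite group); consequently
`G` has at least `2 ^ (2 ^ |I|)` subgroups of finite index. -/
theorem stmt_2 {I : Type u} [Infinite I] (T : Type v) [Group T] [Finite T] [Nontrivial T] :
    (Function.Injective fun F : Ultrafilter I => ultraSubgroup I T F) ∧
      Cardinal.lift.{v} ((2 : Cardinal.{u}) ^ ((2 : Cardinal.{u}) ^ Cardinal.mk I)) ≤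
        Cardinal.lift.{u} (Cardinal.mk {H : Subgroup (∀ _ : I, T) // H.FiniteIndex}) := by

  classical
  refine ⟨ultraSubgroup_injective T, ?_⟩
  have h1 : (2 : Cardinal.{u}) ^ ((2 : Cardinal.{u}) ^ Cardinal.mk I) =
      Cardinal.mk (Set (Set I)) := by
    simp [Cardinal.mk_set]
  rw [h1]
  obtain ⟨e1⟩ := Pospisil.exists_embedding (I := I)
  have e2 : Ultrafilter I ↪ {H : Subgroup (∀ _ : I, T) // H.FiniteIndex} :=
    ⟨fun F => ⟨ultraSubgroup I T F, inferInstance⟩,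
      fun F F' h => ultraSubgroup_injective T (congrArg Subtype.val h)⟩
  have := Cardinal.lift_mk_le'.mpr ⟨e1.trans e2⟩
  rwa [Cardinal.lift_umax] at this
end

section
/- Let G be a profinite group, U an open normal subgroup, and M a family of open normal subgroups H of G such that H ⊆ U and U/H is a minimal nontrivial normal subgroup of G/H. Then there exists a subset N ⊆ M such that the natural homomorphism U → ∏_{H ∈ N} U/H is surjective with kernel equal to ⋂_{H ∈ M} H. -/
/-!
Choose, by Zorn's lemma, a maximal set `N` of indices such that `U` maps onto every finite
subproduct `∏_{i ∈ F} U/Hᵢ`, `F ⊆ N`. For `F ⊆ N` finite and any `j`, the image of the normal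
subgroup `U ∩ ⋂_{i ∈ F} Hᵢ` in `G/Hⱼ` lies in the minimal normal subgroup `U/Hⱼ`, so it is
trivial or all of it. In the second case `j` may be adjoined to `N`; by maximality, either way
`⋂_{i ∈ N} Hᵢ ⊆ Hⱼ`. Surjectivity onto the full product comes from compactness of `U`: the sets
of `u` with prescribed images in finitely many `U/Hᵢ` are closed because the `Hᵢ` are open.
-/

open QuotientGroup

section

variable {U : Type*} [Group U] {ι : Type*}

def FinitelySurjectiveOn (K : ι → Subgroup U) (N : Set ι) : Prop :=
  ∀ F : Finset ι, ↑F ⊆ N → ∀ y : ∀ i, U ⧸ K i, ∃ u : U, ∀ i ∈ F, (u : U ⧸ K i) = y i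

namespace FinitelySurjectiveOn

variable {K : ι → Subgroup U}

theorem empty : FinitelySurjectiveOn K ∅ := fun _ hF _ =>
  ⟨1, fun i hi => absurd (hF hi) (Set.notMem_empty i)⟩

theorem sUnion {c : Set (Set ι)} (hc : IsChain (· ⊆ ·) c) (hne : c.Nonempty)
    (h : ∀ N ∈ c, FinitelySurjectiveOn K N) : FinitelySurjectiveOn K (⋃₀ c) := by
  intro F hF
  obtain ⟨N, hN, hFN⟩ := hc.directedOn.exists_mem_subset_of_finite_of_subset_sUnion hne
    F.finite_toSet hF
  exact h N hN F hFN

variable (K) in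
theorem exists_maximal : ∃ N, Maximal (FinitelySurjectiveOn K) N := by
  obtain ⟨N, -, hN⟩ := zorn_subset_nonempty {N | FinitelySurjectiveOn K N}
    (fun c hcS hc hne => ⟨⋃₀ c, sUnion hc hne hcS, fun _ => Set.subset_sUnion_of_mem⟩) ∅ empty
  exact ⟨N, hN⟩

theorem insert {N : Set ι} {j : ι} [(K j).Normal] (hN : FinitelySurjectiveOn K N)
    (hj : ∀ F : Finset ι, ↑F ⊆ N → (⨅ i ∈ F, K i) ⊔ K j = ⊤) :
    FinitelySurjectiveOn K (insert j N) := by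
  classical
  intro F' hF' y
  have hFN : ↑(F'.erase j) ⊆ N := fun i hi =>
    (hF' (Finset.mem_of_mem_erase hi)).resolve_left (Finset.ne_of_mem_erase hi)
  obtain ⟨u, hu⟩ := hN _ hFN y
  obtain ⟨v, hv⟩ := mk_surjective (y j)
  -- writing `u⁻¹ * v = l * k`, `u * l` is `u` modulo `K i` for `i ≠ j` and `v` modulo `K j`
  obtain ⟨l, hl, k, hk, hlk⟩ :=
    Subgroup.mem_sup_of_normal_right.1 ((hj _ hFN).symm ▸ Subgroup.mem_top (u⁻¹ * v))
  refine ⟨u * l, fun i hi => ?_⟩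
  rcases eq_or_ne i j with rfl | hij
  · rw [← hv, QuotientGroup.eq, mul_inv_rev, mul_assoc, ← hlk, inv_mul_cancel_left]
    exact hk
  · have hl' : l ∈ K i := Subgroup.mem_iInf.1 (Subgroup.mem_iInf.1 hl i)
      (Finset.mem_erase.2 ⟨hij, hi⟩)
    rw [← hu i (Finset.mem_erase.2 ⟨hij, hi⟩), QuotientGroup.eq]
    simpa using hl'

theorem iInf_le_of_maximal {N : Set ι} (hN : Maximal (FinitelySurjectiveOn K) N) {j : ι}
    [(K j).Normal]
    (hj : ∀ F : Finset ι, ↑F ⊆ N → (⨅ i ∈ F, K i) ≤ K j ∨ (⨅ i ∈ F, K i) ⊔ K j = ⊤) :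
    ⨅ i : N, K i ≤ K j := by
  by_cases hle : ∃ F : Finset ι, ↑F ⊆ N ∧ (⨅ i ∈ F, K i) ≤ K j
  · obtain ⟨F, hFN, hFj⟩ := hle
    exact le_trans (le_iInf₂ fun i hi => iInf_le (fun i : N => K i) ⟨i, hFN hi⟩) hFj
  · push Not at hle
    have hjN : j ∈ N := hN.mem_of_prop_insert
      (hN.prop.insert fun F hF => (hj F hF).resolve_left (hle F hF))
    exact iInf_le (fun i : N => K i) ⟨j, hjN⟩

theorem surjective_of_compactSpace [TopologicalSpace U] [IsTopologicalGroup U] [CompactSpace U]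
    (hK : ∀ i, IsOpen (K i : Set U)) {N : Set ι} (hN : FinitelySurjectiveOn K N) :
    Function.Surjective fun (u : U) (i : N) => (u : U ⧸ K i) := by
  classical
  intro y
  have hclosed : ∀ i : N, IsClosed {u : U | (u : U ⧸ K i) = y i} := fun i =>
    have := discreteTopology (hK i)
    (isClosed_discrete {y i}).preimage continuous_quotient_mk'
  obtain ⟨u, hu⟩ := CompactSpace.iInter_nonempty hclosed fun F => by
    obtain ⟨u, hu⟩ := hN (F.map (Function.Embedding.subtype _)) (by simp)
      fun i => if h : i ∈ N then y ⟨i, h⟩ else ((1 : U) : U ⧸ K i)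
    exact ⟨u, Set.mem_iInter₂.2 fun i hi => by
      simpa using hu i (Finset.mem_map_of_mem _ hi)⟩
  exact ⟨u, funext fun i => Set.mem_iInter.1 hu i⟩

end FinitelySurjectiveOn

end

namespace Subgroup

variable {G : Type*} [Group G]

theorem subgroupOf_le_or_sup_eq_top_of_minimal {U H L : Subgroup G} [U.Normal] [H.Normal]
    [L.Normal]
    (hmin : ∀ K : Subgroup (G ⧸ H), K.Normal → K ≤ U.map (mk' H) →
      K = ⊥ ∨ K = U.map (mk' H)) :
    L.subgroupOf U ≤ H.subgroupOf U ∨ L.subgroupOf U ⊔ H.subgroupOf U = ⊤ := by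
  have hnormal : ((L ⊓ U).map (mk' H)).Normal := Normal.map inferInstance _ (mk'_surjective H)
  rcases hmin _ hnormal (map_mono inf_le_right) with h | h
  · left
    rw [map_eq_bot_iff, ker_mk'] at h
    exact fun u hu => h ⟨mem_subgroupOf.1 hu, u.2⟩
  · right
    have hU : U ≤ L ⊓ U ⊔ H := by
      simpa only [ker_mk'] using map_le_map_iff.1 h.ge
    refine eq_top_iff.2 fun u _ => ?_
    obtain ⟨a, ha, b, hb, hab⟩ := mem_sup_of_normal_right.1 (hU u.2)
    have hbU : b ∈ U := by simpa [← hab] using U.mul_mem (U.inv_mem ha.2) u.2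
    have : u = ⟨a, ha.2⟩ * ⟨b, hbU⟩ := Subtype.ext hab.symm
    exact this ▸ mul_mem_sup (mem_subgroupOf.2 ha.1) (mem_subgroupOf.2 hb)

end Subgroup

theorem stmt_5_general {G : Type*} [Group G] [TopologicalSpace G] [IsTopologicalGroup G]
    [CompactSpace G]
    (U : Subgroup G) [U.Normal] (hUopen : IsOpen (U : Set G))
    {ι : Type*} (Hfam : ι → Subgroup G)
    [hnormal : ∀ i, (Hfam i).Normal]
    (hopen : ∀ i, IsOpen ((Hfam i : Subgroup G) : Set G))
    (hmin : ∀ i,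
      U.map (QuotientGroup.mk' (Hfam i)) ≠ ⊥ ∧
      ∀ K : Subgroup (G ⧸ Hfam i), K.Normal → K ≤ U.map (QuotientGroup.mk' (Hfam i)) →
        K = ⊥ ∨ K = U.map (QuotientGroup.mk' (Hfam i))) :
    ∃ N : Set ι,
      ∃ f : U →* ∀ i : N, U ⧸ ((Hfam i).subgroupOf U),
        (∀ (u : U) (i : N), f u i = QuotientGroup.mk u) ∧
        Function.Surjective f ∧
        f.ker = ⨅ i : ι, (Hfam i).subgroupOf U := by
  have : CompactSpace U := isCompact_iff_compactSpace.1 (U.isClosed_of_isOpen hUopen).isCompact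
  obtain ⟨N, hN⟩ := FinitelySurjectiveOn.exists_maximal fun i => (Hfam i).subgroupOf U
  refine ⟨N, MonoidHom.pi fun i => mk' _, fun _ _ => rfl,
    hN.prop.surjective_of_compactSpace fun i => (hopen i).preimage continuous_subtype_val, ?_⟩
  have hker : (MonoidHom.pi fun i : N => mk' ((Hfam i).subgroupOf U)).ker =
      ⨅ i : N, (Hfam i).subgroupOf U := by
    ext u
    simp [Subgroup.mem_iInf, funext_iff, MonoidHom.pi_apply]
  refine hker.trans <| le_antisymm
    (le_iInf fun j => FinitelySurjectiveOn.iInf_le_of_maximal hN fun F _ => ?_)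
    (le_iInf fun i => iInf_le _ (i : ι))
  have : (⨅ i ∈ F, Hfam i).Normal :=
    Subgroup.normal_iInf_normal fun i => Subgroup.normal_iInf_normal fun _ => hnormal i
  have hinf : (⨅ i ∈ F, Hfam i).subgroupOf U = ⨅ i ∈ F, (Hfam i).subgroupOf U := by
    ext u
    simp [Subgroup.mem_subgroupOf, Subgroup.mem_iInf]
  exact hinf ▸ Subgroup.subgroupOf_le_or_sup_eq_top_of_minimal (hmin j).2

/-- Let `G` be a profinite group, `U` an open normal subgroup, and
`M = {Hfam i : i ∈ ι}` a family of open normal subgroups `H ≤ U` such that `U/H` is a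
minimal nontrivial normal subgroup of `G/H`. Then there is a subfamily `N ⊆ ι` such
that the natural homomorphism `U → ∏_{H ∈ N} U/H` is surjective with kernel
`⋂_{H ∈ M} H`. -/
theorem stmt_5 {G : Type*} [Group G] [TopologicalSpace G] [IsTopologicalGroup G]
    [CompactSpace G] [TotallyDisconnectedSpace G] [T2Space G]
    (U : Subgroup G) [U.Normal] (hUopen : IsOpen (U : Set G))
    {ι : Type*} (Hfam : ι → Subgroup G) (hinj : Function.Injective Hfam)
    [hnormal : ∀ i, (Hfam i).Normal]
    (hopen : ∀ i, IsOpen ((Hfam i : Subgroup G) : Set G))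
    (hle : ∀ i, Hfam i ≤ U)
    (hmin : ∀ i,
      U.map (QuotientGroup.mk' (Hfam i)) ≠ ⊥ ∧
      ∀ K : Subgroup (G ⧸ Hfam i), K.Normal → K ≤ U.map (QuotientGroup.mk' (Hfam i)) →
        K = ⊥ ∨ K = U.map (QuotientGroup.mk' (Hfam i))) :
    ∃ N : Set ι,
      ∃ f : U →* ∀ i : N, U ⧸ ((Hfam i).subgroupOf U),
        (∀ (u : U) (i : N), f u i = QuotientGroup.mk u) ∧
        Function.Surjective f ∧
        f.ker = ⨅ i : ι, (Hfam i).subgroupOf U :=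
  stmt_5_general U hUopen Hfam (hnormal := hnormal) hopen hmin
end

section
/- Let G = ∏_p G_p be a pronilpotent profinite group (product of its pro-p Sylow subgroups). Then the abstract profinite completion of G is isomorphic to the product of the abstract profinite completions of the G_p: Ĝ ≅ ∏_p Ĝ_p. -/
/-!
A homomorphism `f` from `∏ p, G p` to a finite group `H` kills every element supported on the
primes not dividing `|H|`: such an element is an `|H|`-th power, since a pro-`p` group has
`m`-th roots for every `m` prime to `p`. Hence `f` factors through the finite product over the
primes dividing `|H|`, where it lifts to `∏ p, Ĝ p` factor by factor (the lifts commute by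
density). So `∏ p, G p → ∏ p, Ĝ p` has the universal property of the completion, and any two
such maps to profinite groups are isomorphic, because lifting to finite quotients and passing
to the limit over open normal subgroups extends the universal property to profinite targets.
-/

open Topology Filter

/-- With `DenseRange k`, this says that `k` is the profinite completion of `S` as an abstract
group. -/
def LiftsToFinite {S A : Type*} [Group S] [Group A] [TopologicalSpace A] (k : S →* A) : Prop :=
  ∀ (H : Type) [Group H] [Finite H] [TopologicalSpace H] [DiscreteTopology H] (f : S →* H),
    ∃! fhat : A →* H, Continuous fhat ∧ fhat.comp k = f

def IsProPGroup (p : ℕ) (G : Type*) [Group G] [TopologicalSpace G] : Prop :=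
  ∀ (U : Subgroup G) [U.Normal], IsOpen (U : Set G) → IsPGroup p (G ⧸ U)

theorem MonoidHom.continuous_of_ker_mem_nhds {A H : Type*} [Group A] [TopologicalSpace A]
    [IsTopologicalGroup A] [Group H] [TopologicalSpace H] [DiscreteTopology H] (g : A →* H)
    (hg : (g.ker : Set A) ∈ 𝓝 1) : Continuous g :=
  continuous_of_continuousAt_one g <| by
    rwa [ContinuousAt, map_one, nhds_discrete H, tendsto_pure]

theorem MonoidHom.ext_of_denseRange {S A B : Type*} [Monoid S] [Monoid A] [TopologicalSpace A]
    [Monoid B] [TopologicalSpace B] [T2Space B] {k : S →* A} (hk : DenseRange k) {u v : A →* B}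
    (hu : Continuous u) (hv : Continuous v) (h : u.comp k = v.comp k) : u = v :=
  DFunLike.coe_injective (hk.equalizer hu hv (congrArg DFunLike.coe h))

theorem commute_of_denseRange {X Y M α β : Type*} [TopologicalSpace X] [TopologicalSpace Y]
    [Mul M] [TopologicalSpace M] [ContinuousMul M] [T2Space M] {u : X → M} {v : Y → M}
    (hu : Continuous u) (hv : Continuous v) {a : α → X} {b : β → Y} (ha : DenseRange a)
    (hb : DenseRange b) (h : ∀ s t, Commute (u (a s)) (v (b t))) (x : X) (y : Y) :
    Commute (u x) (v y) :=
  congrFun ((ha.prodMap hb).equalizer (g := fun z => u z.1 * v z.2) (h := fun z => v z.2 * u z.1)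
    (by fun_prop) (by fun_prop) (funext fun z => h z.1 z.2)) (x, y)

section Profinite

variable {B : Type*} [Group B] [TopologicalSpace B] [IsTopologicalGroup B] [CompactSpace B]

theorem exists_forall_mk_eq_of_compatible (y : ∀ N : OpenNormalSubgroup B, B ⧸ N.toSubgroup)
    (hy : ∀ N M : OpenNormalSubgroup B, N ≤ M → ∀ b : B,
      (b : B ⧸ N.toSubgroup) = y N → (b : B ⧸ M.toSubgroup) = y M) :
    ∃ b : B, ∀ N, (b : B ⧸ N.toSubgroup) = y N := by
  have : Nonempty (OpenNormalSubgroup B) :=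
    ⟨{ toOpenSubgroup := ⊤, isNormal' := by rw [OpenSubgroup.toSubgroup_top]; infer_instance }⟩
  have hfibre (N : OpenNormalSubgroup B) : IsClosed {b : B | (b : B ⧸ N.toSubgroup) = y N} :=
    have := QuotientGroup.discreteTopology N.isOpen'
    (isClosed_discrete {y N}).preimage continuous_quot_mk
  obtain ⟨b, hb⟩ := IsCompact.nonempty_iInter_of_directed_nonempty_isCompact_isClosed
    (fun N => {b : B | (b : B ⧸ N.toSubgroup) = y N})
    (fun N₁ N₂ => ⟨N₁ ⊓ N₂, hy _ _ inf_le_left, hy _ _ inf_le_right⟩)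
    (fun N => QuotientGroup.mk_surjective (y N)) (fun N => (hfibre N).isCompact) hfibre
  exact ⟨b, Set.mem_iInter.mp hb⟩

variable [TotallyDisconnectedSpace B]

theorem mem_of_isClosed_of_forall_openNormalSubgroup {C : Set B} (hC : IsClosed C) {x : B}
    (h : ∀ N : OpenNormalSubgroup B, ∃ c ∈ C, (c : B ⧸ N.toSubgroup) = x) : x ∈ C := by
  refine hC.closure_subset (mem_closure_iff_nhds.mpr fun t ht => ?_)
  obtain ⟨U, hUt, hU, h1U⟩ := mem_nhds_iff.mp
    ((continuous_const_mul x).continuousAt.preimage_mem_nhds (by rwa [mul_one]) :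
      (x * ·) ⁻¹' t ∈ 𝓝 1)
  obtain ⟨N, hN⟩ := ProfiniteGrp.exist_openNormalSubgroup_sub_open_nhds_of_one hU h1U
  obtain ⟨c, hc, hcx⟩ := h N
  exact ⟨c, by simpa using hUt (hN (QuotientGroup.eq.mp hcx.symm)), hc⟩

theorem eq_of_forall_openNormalSubgroup_mk_eq [T1Space B] {b c : B}
    (h : ∀ N : OpenNormalSubgroup B, (b : B ⧸ N.toSubgroup) = c) : b = c :=
  mem_of_isClosed_of_forall_openNormalSubgroup isClosed_singleton fun N => ⟨c, rfl, (h N).symm⟩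

theorem IsProPGroup.exists_pow_eq [T2Space B] {p m : ℕ} (hB : IsProPGroup p B)
    (hm : p.Coprime m) (x : B) : ∃ y : B, y ^ m = x :=
  mem_of_isClosed_of_forall_openNormalSubgroup (isCompact_range (continuous_pow m)).isClosed
    fun N => by
      obtain ⟨z, hz⟩ := ((hB N.toSubgroup N.isOpen').powEquiv hm).surjective x
      obtain ⟨y, rfl⟩ := QuotientGroup.mk_surjective z
      exact ⟨y ^ m, ⟨y, rfl⟩, hz⟩

end Profinite

section Lift

variable {S A : Type*} [Group S] [Group A] [TopologicalSpace A]

theorem LiftsToFinite.of_exists {k : S →* A} (hk : DenseRange k)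
    (h : ∀ (H : Type) [Group H] [Finite H] [TopologicalSpace H] [DiscreteTopology H]
      (f : S →* H), ∃ fhat : A →* H, Continuous fhat ∧ fhat.comp k = f) :
    LiftsToFinite k := by
  intro H _ _ _ _ f
  obtain ⟨fhat, hc, hf⟩ := h H f
  exact ⟨fhat, ⟨hc, hf⟩, fun g ⟨hg, hgf⟩ =>
    MonoidHom.ext_of_denseRange hk hg hc (hgf.trans hf.symm)⟩

variable [IsTopologicalGroup A] {B : Type} [Group B] [TopologicalSpace B] [IsTopologicalGroup B]
  [CompactSpace B] [TotallyDisconnectedSpace B] [T1Space B]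

theorem LiftsToFinite.exists_continuous_comp_eq {k : S →* A} (hk : LiftsToFinite k)
    (m : S →* B) : ∃ φ : A →* B, Continuous φ ∧ φ.comp k = m := by
  choose g hg hgk using fun N : OpenNormalSubgroup B =>
    (hk (B ⧸ N.toSubgroup) ((QuotientGroup.mk' N.toSubgroup).comp m)).exists
  have hcompat (N M : OpenNormalSubgroup B) (hNM : N ≤ M) (b : B) (a : A)
      (hb : (b : B ⧸ N.toSubgroup) = g N a) : (b : B ⧸ M.toSubgroup) = g M a := by
    let π := QuotientGroup.map N.toSubgroup M.toSubgroup (MonoidHom.id B) hNM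
    have : π.comp (g N) = g M := (hk _ _).unique
      ⟨(continuous_of_discreteTopology (f := π)).comp (hg N),
        by rw [MonoidHom.comp_assoc, hgk N]; rfl⟩
      ⟨hg M, hgk M⟩
    rw [← this, MonoidHom.comp_apply, ← hb]
    rfl
  choose φ hφ using fun a =>
    exists_forall_mk_eq_of_compatible (fun N => g N a) fun N M hNM b => hcompat N M hNM b a
  let Φ : A →* B :=
    { toFun := φ
      map_one' := eq_of_forall_openNormalSubgroup_mk_eq fun N => by rw [hφ, map_one]; rfl
      map_mul' := fun a b => eq_of_forall_openNormalSubgroup_mk_eq fun N => by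
        rw [hφ, map_mul, QuotientGroup.mk_mul, hφ, hφ] }
  refine ⟨Φ, continuous_of_continuousAt_one Φ ?_, ?_⟩
  · rw [ContinuousAt, map_one]
    intro t ht
    obtain ⟨U, hUt, hU, h1U⟩ := mem_nhds_iff.mp ht
    obtain ⟨N, hN⟩ := ProfiniteGrp.exist_openNormalSubgroup_sub_open_nhds_of_one hU h1U
    exact Filter.mem_map.mpr <| mem_of_superset
      (((hg N).isOpen_preimage {1} (isOpen_discrete _)).mem_nhds (map_one _)) fun a ha =>
        hUt (hN ((QuotientGroup.eq_one_iff _).mp ((hφ a N).trans ha)))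
  · ext s
    exact eq_of_forall_openNormalSubgroup_mk_eq fun N =>
      (hφ (k s) N).trans (DFunLike.congr_fun (hgk N) s)

end Lift

section Pi

variable {ι : Type*} {G : ι → Type*} [∀ i, Group (G i)]

def MonoidHom.piRestrict (s : Set ι) : (∀ i, G i) →* ∀ i : s, G i :=
  MonoidHom.pi fun i => Pi.evalMonoidHom G i

def MonoidHom.piExtendOne (s : Set ι) [DecidablePred (· ∈ s)] : (∀ i : s, G i) →* ∀ i, G i where
  toFun v i := if h : i ∈ s then v ⟨i, h⟩ else 1
  map_one' := funext fun i => by by_cases h : i ∈ s <;> simp [h]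
  map_mul' v w := funext fun i => by by_cases h : i ∈ s <;> simp [h]

theorem MonoidHom.eq_comp_piExtendOne_comp_piRestrict {H : Type*} [Group H] (s : Set ι)
    [DecidablePred (· ∈ s)] (f : (∀ i, G i) →* H) (hf : ∀ x, (∀ i ∈ s, x i = 1) → f x = 1) :
    f = (f.comp (piExtendOne s)).comp (piRestrict s) := by
  refine MonoidHom.ext fun x => ?_
  have := hf ((piExtendOne s (piRestrict s x))⁻¹ * x) fun i hi => by
    simp [piExtendOne, piRestrict, hi]
  rwa [map_mul, map_inv, inv_mul_eq_one, eq_comm] at this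

variable {A : ι → Type*} [∀ i, Group (A i)] [∀ i, TopologicalSpace (A i)]
  [∀ i, IsTopologicalGroup (A i)]

theorem MonoidHom.continuous_noncommPiCoprod [Fintype ι] {H : Type*} [Group H]
    [TopologicalSpace H] [DiscreteTopology H] {g : ∀ i, A i →* H}
    (hcomm : Pairwise fun i j => ∀ x y, Commute (g i x) (g j y)) (hg : ∀ i, Continuous (g i)) :
    Continuous (MonoidHom.noncommPiCoprod g hcomm) := by
  refine (MonoidHom.noncommPiCoprod g hcomm).continuous_of_ker_mem_nhds <| mem_of_superset
    (set_pi_mem_nhds Set.finite_univ fun i _ =>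
      (hg i).continuousAt.preimage_mem_nhds ((isOpen_discrete {1}).mem_nhds (map_one (g i))))
    fun y hy => ?_
  rw [SetLike.mem_coe, MonoidHom.mem_ker, MonoidHom.noncommPiCoprod_apply]
  exact (Finset.noncommProd_eq_pow_card _ _ _ 1 fun i _ => hy i (Set.mem_univ i)).trans (one_pow _)

theorem LiftsToFinite.piMap [Fintype ι] [DecidableEq ι] {k : ∀ i, G i →* A i}
    (hk : ∀ i, DenseRange (k i)) (hl : ∀ i, LiftsToFinite (k i)) :
    LiftsToFinite (MonoidHom.piMap k) := by
  refine LiftsToFinite.of_exists (DenseRange.piMap hk) fun H _ _ _ _ f => ?_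
  choose g hg hgk using fun i => (hl i H (f.comp (MonoidHom.mulSingle G i))).exists
  have hcomm : Pairwise fun i j => ∀ x y, Commute (g i x) (g j y) := fun i j hij =>
    commute_of_denseRange (hg i) (hg j) (hk i) (hk j) fun s t => by
      rw [← MonoidHom.comp_apply, ← MonoidHom.comp_apply (g j), hgk, hgk]
      exact (Pi.mulSingle_commute hij s t).map f
  refine ⟨MonoidHom.noncommPiCoprod g hcomm, MonoidHom.continuous_noncommPiCoprod hcomm hg,
    MonoidHom.pi_ext fun i x => ?_⟩
  have : MonoidHom.piMap k (Pi.mulSingle i x) = Pi.mulSingle i (k i x) :=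
    funext fun j => Pi.apply_mulSingle (fun j => k j) (fun j => map_one (k j)) i x j
  rw [MonoidHom.comp_apply, this, MonoidHom.noncommPiCoprod_mulSingle, ← MonoidHom.comp_apply,
    hgk]
  rfl

end Pi

section Pronilpotent

variable {G : Nat.Primes → Type*} [∀ p, Group (G p)] [∀ p, TopologicalSpace (G p)]
  [∀ p, IsTopologicalGroup (G p)] [∀ p, CompactSpace (G p)]
  [∀ p, TotallyDisconnectedSpace (G p)] [∀ p, T2Space (G p)]

theorem map_eq_one_of_forall_dvd_card {H : Type*} [Group H] [Finite H]
    (hG : ∀ p : Nat.Primes, IsProPGroup p (G p)) (f : (∀ p, G p) →* H) {x : ∀ p, G p}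
    (hx : ∀ p : Nat.Primes, (p : ℕ) ∣ Nat.card H → x p = 1) : f x = 1 := by
  have hroot (p : Nat.Primes) : ∃ w : G p, w ^ Nat.card H = x p := by
    by_cases hp : (p : ℕ) ∣ Nat.card H
    · exact ⟨1, by rw [one_pow, hx p hp]⟩
    · exact (hG p).exists_pow_eq ((Nat.Prime.coprime_iff_not_dvd p.2).mpr hp) (x p)
  choose w hw using hroot
  rw [show x = w ^ Nat.card H from funext fun p => (hw p).symm, map_pow, pow_card_eq_one']

theorem liftsToFinite_piMap_of_isProPGroup (hG : ∀ p : Nat.Primes, IsProPGroup p (G p))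
    {A : Nat.Primes → Type*} [∀ p, Group (A p)] [∀ p, TopologicalSpace (A p)]
    [∀ p, IsTopologicalGroup (A p)] {k : ∀ p, G p →* A p} (hk : ∀ p, DenseRange (k p))
    (hl : ∀ p, LiftsToFinite (k p)) : LiftsToFinite (MonoidHom.piMap k) := by
  classical
  refine LiftsToFinite.of_exists (DenseRange.piMap hk) fun H _ _ _ _ f => ?_
  let s : Set Nat.Primes := {p | (p : ℕ) ∣ Nat.card H}
  have : Fintype s := Set.Finite.fintype <|
    ((Set.finite_le_nat (Nat.card H)).preimage Nat.Primes.coe_nat_injective.injOn).subset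
      fun p hp => Nat.le_of_dvd Nat.card_pos hp
  obtain ⟨g, hg, hgf⟩ := ((LiftsToFinite.piMap (fun p : s => hk p) fun p => hl p) H
    (f.comp (MonoidHom.piExtendOne s))).exists
  refine ⟨g.comp (MonoidHom.piRestrict s), hg.comp (continuous_pi fun p => continuous_apply _), ?_⟩
  conv_rhs => rw [f.eq_comp_piExtendOne_comp_piRestrict s fun x hx =>
    map_eq_one_of_forall_dvd_card hG f fun p hp => hx p hp]
  rw [← hgf]
  rfl

end Pronilpotent

theorem LiftsToFinite.nonempty_continuousMulEquiv {S : Type*} {A₁ A₂ : Type} [Group S]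
    [Group A₁] [TopologicalSpace A₁] [IsTopologicalGroup A₁] [CompactSpace A₁]
    [TotallyDisconnectedSpace A₁] [T1Space A₁]
    [Group A₂] [TopologicalSpace A₂] [IsTopologicalGroup A₂] [CompactSpace A₂]
    [TotallyDisconnectedSpace A₂] [T1Space A₂] {k₁ : S →* A₁} {k₂ : S →* A₂}
    (hd₁ : DenseRange k₁) (hd₂ : DenseRange k₂) (h₁ : LiftsToFinite k₁) (h₂ : LiftsToFinite k₂) :
    Nonempty (A₁ ≃ₜ* A₂) := by
  obtain ⟨φ, hφ, hφk⟩ := h₁.exists_continuous_comp_eq k₂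
  obtain ⟨ψ, hψ, hψk⟩ := h₂.exists_continuous_comp_eq k₁
  have hψφ : ψ.comp φ = MonoidHom.id A₁ := MonoidHom.ext_of_denseRange hd₁ (hψ.comp hφ)
    continuous_id (by rw [MonoidHom.comp_assoc, hφk, hψk]; rfl)
  have hφψ : φ.comp ψ = MonoidHom.id A₂ := MonoidHom.ext_of_denseRange hd₂ (hφ.comp hψ)
    continuous_id (by rw [MonoidHom.comp_assoc, hψk, hφk]; rfl)
  exact ⟨{ φ.toMulEquiv ψ hψφ hφψ with continuous_toFun := hφ, continuous_invFun := hψ }⟩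

/-- Let `G = ∏_p G_p` be a pronilpotent profinite group (the product of
its pro-`p` Sylow subgroups).  If `i_p : G_p →* Ghat_p` are the abstract profinite
completions of the `G_p` and `i : G →* Ghat` is the abstract profinite completion of
`G` (dense range and unique continuous lifts to finite groups), then
`Ghat ≅ ∏_p Ghat_p` as topological groups. -/
theorem stmt_12 (G : Nat.Primes → Type) [∀ p, Group (G p)]
    [∀ p, TopologicalSpace (G p)] [∀ p, IsTopologicalGroup (G p)]
    [∀ p, CompactSpace (G p)] [∀ p, TotallyDisconnectedSpace (G p)] [∀ p, T2Space (G p)]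
    (hpro : ∀ p : Nat.Primes, ∀ (U : Subgroup (G p)) [U.Normal],
      IsOpen (U : Set (G p)) → IsPGroup (p : ℕ) ((G p) ⧸ U))
    (Ghatp : Nat.Primes → Type) [∀ p, Group (Ghatp p)]
    [∀ p, TopologicalSpace (Ghatp p)] [∀ p, IsTopologicalGroup (Ghatp p)]
    [∀ p, CompactSpace (Ghatp p)] [∀ p, TotallyDisconnectedSpace (Ghatp p)]
    [∀ p, T2Space (Ghatp p)]
    (ip : ∀ p, G p →* Ghatp p) (hpdense : ∀ p, DenseRange (ip p))
    (hpuniv : ∀ p, ∀ (H : Type) [Group H] [Finite H] [TopologicalSpace H]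
      [DiscreteTopology H] (f : G p →* H),
      ∃! fhat : Ghatp p →* H, Continuous fhat ∧ fhat.comp (ip p) = f)
    (Ghat : Type) [Group Ghat] [TopologicalSpace Ghat] [IsTopologicalGroup Ghat]
    [CompactSpace Ghat] [TotallyDisconnectedSpace Ghat] [T2Space Ghat]
    (i : (∀ p, G p) →* Ghat) (hdense : DenseRange i)
    (huniv : ∀ (H : Type) [Group H] [Finite H] [TopologicalSpace H]
      [DiscreteTopology H] (f : (∀ p, G p) →* H),
      ∃! fhat : Ghat →* H, Continuous fhat ∧ fhat.comp i = f) :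
    ∃ e : Ghat ≃* ∀ p, Ghatp p, Continuous e ∧ Continuous e.symm := by
  obtain ⟨e⟩ := LiftsToFinite.nonempty_continuousMulEquiv hdense (DenseRange.piMap hpdense) huniv
    (liftsToFinite_piMap_of_isProPGroup hpro hpdense hpuniv)
  exact ⟨e.toMulEquiv, e.continuous, e.symm.continuous⟩
end

section
/- Let G = ∏_p G_p be a pronilpotent group expressed as a product of pro-p groups. Then G is strongly complete (every finite-index subgroup is open) if and only if G_p is strongly complete for every prime p. -/
/-!
The projections `∏ G_p → G_p` are open surjections, so strong completeness passes to the
factors. Conversely, it suffices to show that a finite-index normal subgroup `N` of `∏ G_p` is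
open; let `n` be its index. Being pro-`p`, each `G_p` with `p ∤ n` is `q`-divisible for every prime `q ∣ n`, so the image in the
finite group `(∏ G_p) ⧸ N` of the elements supported on the primes not dividing `n` has
surjective `q`-th power maps for every prime `q` dividing its order, and is therefore trivial.
Hence `N` contains the open subgroup of elements whose `p`-coordinates, for the finitely many
`p ∣ n`, lie in the (open, by assumption) preimages of `N` under the inclusions `G_p → ∏ G_p`.
-/

def StronglyComplete (G : Type*) [Group G] [TopologicalSpace G] : Prop :=
  ∀ U : Subgroup G, U.FiniteIndex → IsOpen (U : Set G)

theorem StronglyComplete.of_surjective {G H : Type*} [Group G] [TopologicalSpace G] [Group H]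
    [TopologicalSpace H] (hG : StronglyComplete G) (f : G →* H) (hf : Function.Surjective f)
    (hfo : IsOpenMap f) : StronglyComplete H := by
  intro U hU
  have : (U.comap f).FiniteIndex := ⟨by
    rw [U.index_comap_of_surjective hf]; exact hU.index_ne_zero⟩
  rw [← Set.image_preimage_eq (U : Set H) hf]
  exact hfo _ (hG _ this)

section Profinite

variable {H : Type*} [Group H] [TopologicalSpace H] [IsTopologicalGroup H] [CompactSpace H]
  [TotallyDisconnectedSpace H] [T2Space H]

/-- The range of the `n`-th power map is compact, hence closed, and it is dense because it meets
every coset of every open normal subgroup. -/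
theorem exists_pow_eq_of_surjective_pow_quotient {n : ℕ}
    (h : ∀ U : OpenNormalSubgroup H, Function.Surjective (· ^ n : H ⧸ U.toSubgroup → _))
    (x : H) : ∃ y : H, y ^ n = x := by
  have hclosed : IsClosed (Set.range (· ^ n : H → H)) :=
    (isCompact_range (continuous_pow n)).isClosed
  suffices x ∈ closure (Set.range (· ^ n : H → H)) from hclosed.closure_eq.subset this
  refine mem_closure_iff.mpr fun W hW hxW => ?_
  obtain ⟨U, hU⟩ := ProfiniteGrp.exist_openNormalSubgroup_sub_open_nhds_of_one
    (hW.preimage (continuous_const_mul x)) (by simpa using hxW)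
  obtain ⟨w, hw⟩ := h U (x : H ⧸ U.toSubgroup)
  obtain ⟨z, rfl⟩ := QuotientGroup.mk_surjective w
  have hzU : x⁻¹ * z ^ n ∈ U.toSubgroup := QuotientGroup.eq.mp hw.symm
  exact ⟨z ^ n, by simpa using hU hzU, z, rfl⟩

theorem exists_pow_eq_of_isPGroup_quotient {p q : ℕ}
    (hpro : ∀ (U : Subgroup H) [U.Normal], IsOpen (U : Set H) → IsPGroup p (H ⧸ U))
    (hpq : p.Coprime q) (x : H) : ∃ y : H, y ^ q = x :=
  exists_pow_eq_of_surjective_pow_quotient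
    (fun U => ((hpro U.toSubgroup U.isOpen).powEquiv hpq).surjective) x

end Profinite

theorem not_dvd_natCard_of_pow_surjective {L : Type*} [Group L] [Finite L] {q : ℕ}
    (hq : q.Prime) (h : Function.Surjective (· ^ q : L → L)) : ¬ q ∣ Nat.card L := by
  intro hdvd
  obtain ⟨g, hg⟩ := exists_prime_orderOf_dvd_card' (G := L) q hdvd (hp := ⟨hq⟩)
  have hinj : Function.Injective (· ^ q : L → L) := Finite.injective_iff_surjective.mpr h
  have : g = 1 := hinj (by simp only [← hg, pow_orderOf_eq_one, one_pow])
  exact hq.one_lt.ne' (by rw [← hg, this, orderOf_one])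

/-- The image of `B` in the finite group `P ⧸ N` has no prime divisor of its order. -/
theorem Subgroup.le_of_forall_exists_pow_eq {P : Type*} [Group P] (N : Subgroup P) [N.Normal]
    [N.FiniteIndex] (B : Subgroup P)
    (h : ∀ q : ℕ, q.Prime → q ∣ N.index → ∀ b ∈ B, ∃ c ∈ B, c ^ q = b) :
    B ≤ N := by
  set L := B.map (QuotientGroup.mk' N)
  have hL : Nat.card L = 1 := by
    refine Nat.eq_one_iff_not_exists_prime_dvd.mpr fun q hq hqL => ?_
    refine not_dvd_natCard_of_pow_surjective hq ?_ hqL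
    rintro ⟨_, b, hb, rfl⟩
    have hqN : q ∣ N.index := hqL.trans <| N.index_eq_card ▸ Subgroup.card_subgroup_dvd_card L
    obtain ⟨c, hc, rfl⟩ := h q hq hqN b hb
    exact ⟨⟨_, c, hc, rfl⟩, rfl⟩
  rw [← QuotientGroup.ker_mk' N, ← Subgroup.map_eq_bot_iff, ← Subgroup.card_eq_one]
  exact hL

theorem Nat.Primes.finite_setOf_dvd {n : ℕ} (hn : n ≠ 0) :
    {p : Nat.Primes | (p : ℕ) ∣ n}.Finite :=
  n.primeFactors.finite_toSet.preimage Subtype.val_injective.injOn |>.subset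
    fun p hp => Nat.mem_primeFactors.mpr ⟨p.2, hp, hn⟩

section PrimeIndexed

variable {G : Nat.Primes → Type*} [∀ p, Group (G p)]

theorem Subgroup.pi_bot_le_of_forall_exists_pow_eq
    (hroot : ∀ (p : Nat.Primes) (q : ℕ), q.Prime → q ≠ p → ∀ x : G p, ∃ y, y ^ q = x)
    (N : Subgroup (∀ p, G p)) [N.Normal] [N.FiniteIndex] :
    Subgroup.pi {p : Nat.Primes | (p : ℕ) ∣ N.index} (fun _ => ⊥) ≤ N := by
  refine N.le_of_forall_exists_pow_eq _ fun q hq hqN b hb => ?_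
  have hb1 : ∀ p : Nat.Primes, (p : ℕ) ∣ N.index → b p = 1 := hb
  have hroot_b (p : Nat.Primes) :
      ∃ y : G p, y ^ q = b p ∧ ((p : ℕ) ∣ N.index → y = 1) := by
    by_cases hp : (p : ℕ) ∣ N.index
    · exact ⟨1, by rw [one_pow, hb1 p hp], fun _ => rfl⟩
    · obtain ⟨y, hy⟩ := hroot p q hq (fun he => hp (he ▸ hqN)) (b p)
      exact ⟨y, hy, fun hd => absurd hd hp⟩
  choose c hcq hc1 using hroot_b
  exact ⟨c, fun p hp => hc1 p hp, funext hcq⟩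

theorem Subgroup.pi_comap_mulSingle_le
    (hroot : ∀ (p : Nat.Primes) (q : ℕ), q.Prime → q ≠ p → ∀ x : G p, ∃ y, y ^ q = x)
    (N : Subgroup (∀ p, G p)) [N.Normal] [N.FiniteIndex] :
    Subgroup.pi {p : Nat.Primes | (p : ℕ) ∣ N.index}
      (fun p => N.comap (MonoidHom.mulSingle G p)) ≤ N := by
  classical
  intro f hf
  set S := {p : Nat.Primes | (p : ℕ) ∣ N.index}
  have hS : S.Finite := Nat.Primes.finite_setOf_dvd Subgroup.FiniteIndex.index_ne_zero
  set f₁ : ∀ p, G p := fun p => if p ∈ S then f p else 1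
  have hf₁ : f₁ ∈ N := by
    refine Submonoid.pi_mem_of_mulSingle_mem_aux hS.toFinset f₁
      (fun p hp => if_neg (by simpa using hp)) fun p hp => ?_
    rw [show f₁ p = f p from if_pos (by simpa using hp)]
    exact (Subgroup.mem_pi _).mp hf p (by simpa using hp)
  have hf₂ : f₁⁻¹ * f ∈ N := by
    refine Subgroup.pi_bot_le_of_forall_exists_pow_eq hroot N fun p hp => ?_
    simp [f₁, show p ∈ S from hp]
  simpa using N.mul_mem hf₁ hf₂

theorem StronglyComplete.pi [∀ p, TopologicalSpace (G p)] [∀ p, IsTopologicalGroup (G p)]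
    (hroot : ∀ (p : Nat.Primes) (q : ℕ), q.Prime → q ≠ p → ∀ x : G p, ∃ y, y ^ q = x)
    (hG : ∀ p, StronglyComplete (G p)) : StronglyComplete (∀ p, G p) := by
  intro U hU
  set N := U.normalCore
  refine Subgroup.isOpen_mono ((Subgroup.pi_comap_mulSingle_le hroot N).trans U.normalCore_le) ?_
  rw [Subgroup.coe_pi]
  refine isOpen_set_pi (Nat.Primes.finite_setOf_dvd Subgroup.FiniteIndex.index_ne_zero)
    fun p _ => hG p _ ⟨?_⟩
  simpa using Subgroup.relIndex_comap_ne_zero (MonoidHom.mulSingle G p) (K := ⊤)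
    (by simpa using (Subgroup.FiniteIndex.index_ne_zero : N.index ≠ 0))

end PrimeIndexed

/-- Let `G = ∏_p G_p` be a pronilpotent group expressed as a product of
pro-`p` groups.  Then `G` is strongly complete (every finite-index subgroup is open)
if and only if every `G_p` is strongly complete. -/
theorem stmt_13 (G : Nat.Primes → Type*) [∀ p, Group (G p)]
    [∀ p, TopologicalSpace (G p)] [∀ p, IsTopologicalGroup (G p)]
    [∀ p, CompactSpace (G p)] [∀ p, TotallyDisconnectedSpace (G p)] [∀ p, T2Space (G p)]
    (hpro : ∀ p : Nat.Primes, ∀ (U : Subgroup (G p)) [U.Normal],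
      IsOpen (U : Set (G p)) → IsPGroup (p : ℕ) ((G p) ⧸ U)) :
    (∀ U : Subgroup (∀ p, G p), U.FiniteIndex → IsOpen (U : Set (∀ p, G p))) ↔
      (∀ p : Nat.Primes, ∀ U : Subgroup (G p), U.FiniteIndex → IsOpen (U : Set (G p))) := by
  have hroot (p : Nat.Primes) (q : ℕ) (hq : q.Prime) (hqp : q ≠ p) (x : G p) :
      ∃ y, y ^ q = x :=
    exists_pow_eq_of_isPGroup_quotient (hpro p) ((Nat.coprime_primes p.2 hq).mpr hqp.symm) x
  have hsurj (p : Nat.Primes) : Function.Surjective (Pi.evalMonoidHom G p) :=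
    fun x => ⟨Pi.mulSingle p x, Pi.mulSingle_eq_same p x⟩
  exact ⟨fun h p =>
    StronglyComplete.of_surjective h (Pi.evalMonoidHom G p) (hsurj p) (isOpenMap_eval p),
    StronglyComplete.pi hroot⟩
end

section
/- Let H be a profinite group. The supernatural order of the abstract profinite completion Ĥ equals the supernatural order of H: o(Ĥ) = o(H). -/
/-!
Let `G` be profinite, `p` prime and `N` a normal subgroup of finite index with `p ^ k ∣ [G : N]`.
If some open normal `V₀` has `p ∤ [V₀ : V ∩ V₀]` for every open normal `V`, then `p`-th powers
are bijective on each finite quotient `V₀ / (V ∩ V₀)`, so by compactness every element of `V₀` is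
a `p`-th power. Hence `p`-th powers are onto in `V₀ / (N ∩ V₀)`, so `p ∤ [V₀ : N ∩ V₀]` and
`p ^ k ∣ [G : V₀]`. If there is no such `V₀`, intersecting open normal subgroups makes the
`p`-part of their indices unbounded. Either way `p ^ k` divides the index of an open normal
subgroup. For the completion `i : H → Ĥ`, pulling back along the dense map `i` preserves the
indices of open normal subgroups, and the universal property lifts each finite quotient of `H`
to a continuous quotient of `Ĥ`.
-/

theorem not_dvd_card_of_pow_surjective {Q : Type*} [Group Q] [Finite Q] {p : ℕ} (hp : p.Prime)
    (h : Function.Surjective (· ^ p : Q → Q)) : ¬ p ∣ Nat.card Q := by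
  intro hdvd
  have := Fact.mk hp
  obtain ⟨x, hx⟩ := exists_prime_orderOf_dvd_card' p hdvd
  have hx1 : x = 1 := Finite.injective_iff_surjective.mpr h <| by
    simp only [one_pow, ← hx, pow_orderOf_eq_one]
  exact hp.one_lt.ne' (by rw [← hx, hx1, orderOf_one])

theorem MonoidHom.index_ker_of_surjective {G Q : Type*} [Group G] [Group Q] {f : G →* Q}
    (hf : Function.Surjective f) : f.ker.index = Nat.card Q := by
  rw [Subgroup.index_ker, f.range_eq_top_of_surjective hf, Subgroup.card_top]

namespace Subgroup

variable {G : Type*} [Group G]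

theorem exists_inv_mul_pow_mem {K N : Subgroup G} [N.Normal] {n : ℕ}
    (hn : (N.relIndex K).Coprime n) {x : G} (hx : x ∈ K) : ∃ y ∈ K, x⁻¹ * y ^ n ∈ N := by
  obtain ⟨q, hq⟩ := (powCoprime hn).surjective (⟨x, hx⟩ : K)
  induction q using QuotientGroup.induction_on with | H y => ?_
  have hmem : (⟨x, hx⟩ : K)⁻¹ * y ^ n ∈ N.subgroupOf K := QuotientGroup.eq.mp hq.symm
  exact ⟨y, y.2, hmem⟩

theorem not_dvd_relIndex_of_forall_exists_pow_eq {K N : Subgroup G} [N.Normal]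
    [N.IsFiniteRelIndex K] {p : ℕ} (hp : p.Prime) (h : ∀ x ∈ K, ∃ y ∈ K, y ^ p = x) :
    ¬ p ∣ N.relIndex K := by
  refine not_dvd_card_of_pow_surjective (Q := K ⧸ N.subgroupOf K) hp fun q => ?_
  induction q using QuotientGroup.induction_on with | H x => ?_
  obtain ⟨y, hy, hyx⟩ := h x x.2
  exact ⟨(⟨y, hy⟩ : K), by
    simp only [← QuotientGroup.mk_pow]
    exact congrArg _ (Subtype.ext hyx)⟩

theorem index_comap_of_denseRange {H : Type*} [Group H] [TopologicalSpace H]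
    [SeparatelyContinuousMul H] {f : G →* H} (hf : DenseRange f) (U : Subgroup H) [U.Normal]
    (hU : IsOpen (U : Set H)) : (U.comap f).index = U.index := by
  have := QuotientGroup.discreteTopology hU
  have hsurj : Function.Surjective ((QuotientGroup.mk' U).comp f) := fun q =>
    hf.exists_mem_open ((isOpen_discrete {q}).preimage continuous_quot_mk)
      (QuotientGroup.mk'_surjective U q)
  have hker : U.comap f = ((QuotientGroup.mk' U).comp f).ker := by
    rw [← MonoidHom.comap_ker, QuotientGroup.ker_mk']
  rw [hker, MonoidHom.index_ker_of_surjective hsurj, index_eq_card]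

end Subgroup

section Profinite

variable {G : Type*} [Group G] [TopologicalSpace G] [IsTopologicalGroup G] [CompactSpace G]
  [TotallyDisconnectedSpace G]

theorem IsClosed.mem_of_forall_openNormalSubgroup {F : Set G} (hF : IsClosed F) {x : G}
    (h : ∀ V : OpenNormalSubgroup G, ∃ y ∈ F, x⁻¹ * y ∈ V) : x ∈ F := by
  refine hF.closure_subset (mem_closure_iff.mpr fun U hU hxU => ?_)
  obtain ⟨V, hV⟩ := ProfiniteGrp.exist_openNormalSubgroup_sub_open_nhds_of_one
    (hU.preimage (continuous_const_mul x)) (by simpa using hxU)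
  obtain ⟨y, hyF, hy⟩ := h V
  exact ⟨y, by simpa using hV hy, hyF⟩

theorem Subgroup.exists_pow_eq_of_coprime_relIndex [T2Space G] {K : Subgroup G}
    (hK : IsClosed (K : Set G)) {n : ℕ}
    (hn : ∀ V : OpenNormalSubgroup G, ((V : Subgroup G).relIndex K).Coprime n) {x : G}
    (hx : x ∈ K) : ∃ y ∈ K, y ^ n = x := by
  have hF : IsClosed ((· ^ n) '' (K : Set G)) := (hK.isCompact.image (continuous_pow n)).isClosed
  refine hF.mem_of_forall_openNormalSubgroup fun V => ?_
  obtain ⟨y, hyK, hy⟩ := exists_inv_mul_pow_mem (hn V) hx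
  exact ⟨y ^ n, ⟨y, hyK, rfl⟩, hy⟩

end Profinite

theorem OpenNormalSubgroup.exists_pow_dvd_index {G : Type*} [Group G] [TopologicalSpace G] {p : ℕ}
    (h : ∀ V₀ : OpenNormalSubgroup G, ∃ V : OpenNormalSubgroup G, p ∣ (V : Subgroup G).relIndex V₀)
    (m : ℕ) : ∃ V : OpenNormalSubgroup G, p ^ m ∣ (V : Subgroup G).index := by
  induction m with
  | zero => exact ⟨{ toSubgroup := ⊤, isOpen' := isOpen_univ }, by simp⟩
  | succ m ih =>
    obtain ⟨V₀, hV₀⟩ := ih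
    obtain ⟨V, hV⟩ := h V₀
    refine ⟨V ⊓ V₀, ?_⟩
    have hindex : ((V ⊓ V₀ : OpenNormalSubgroup G) : Subgroup G).index =
        (V : Subgroup G).relIndex V₀ * (V₀ : Subgroup G).index := by
      rw [← Subgroup.inf_relIndex_right, Subgroup.relIndex_mul_index inf_le_right]; rfl
    rw [hindex, pow_succ']
    exact mul_dvd_mul hV hV₀

theorem Subgroup.exists_openNormalSubgroup_pow_dvd_index {G : Type*} [Group G]
    [TopologicalSpace G] [IsTopologicalGroup G] [CompactSpace G] [TotallyDisconnectedSpace G]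
    [T2Space G] {p k : ℕ} (hp : p.Prime) (N : Subgroup G) [N.Normal] [N.FiniteIndex]
    (hN : p ^ k ∣ N.index) : ∃ V : OpenNormalSubgroup G, p ^ k ∣ (V : Subgroup G).index := by
  by_cases h : ∀ V₀ : OpenNormalSubgroup G, ∃ V : OpenNormalSubgroup G,
      p ∣ (V : Subgroup G).relIndex V₀
  · exact OpenNormalSubgroup.exists_pow_dvd_index h k
  push Not at h
  obtain ⟨V₀, hV₀⟩ := h
  have hroots : ∀ x ∈ (V₀ : Subgroup G), ∃ y ∈ (V₀ : Subgroup G), y ^ p = x := fun _ hx =>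
    exists_pow_eq_of_coprime_relIndex V₀.isClosed
      (fun V => (hp.coprime_iff_not_dvd.mpr (hV₀ V)).symm) hx
  have : N.IsFiniteRelIndex V₀ := isFiniteRelIndex_of_finiteIndex
  have hN₀ : (N.relIndex V₀).Coprime p :=
    (hp.coprime_iff_not_dvd.mpr (not_dvd_relIndex_of_forall_exists_pow_eq hp hroots)).symm
  have hdvd : p ^ k ∣ N.relIndex V₀ * (V₀ : Subgroup G).index := calc
    p ^ k ∣ N.index := hN
    _ ∣ (N ⊓ V₀).index := index_dvd_of_le inf_le_left
    _ = N.relIndex V₀ * (V₀ : Subgroup G).index := by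
      rw [← inf_relIndex_right, relIndex_mul_index inf_le_right]
  exact ⟨V₀, (hN₀.symm.pow_left k).dvd_of_dvd_mul_left hdvd⟩

theorem stmt_14_general {H : Type} [Group H] [TopologicalSpace H] [IsTopologicalGroup H]
    [CompactSpace H] [TotallyDisconnectedSpace H] [T2Space H]
    {Hhat : Type} [Group Hhat] [TopologicalSpace Hhat] [IsTopologicalGroup Hhat]
    [CompactSpace Hhat]
    (i : H →* Hhat) (hdense : DenseRange i)
    (huniv : ∀ (K : Type) [Group K] [Finite K] [TopologicalSpace K] [DiscreteTopology K]
      (f : H →* K), ∃! fhat : Hhat →* K, Continuous fhat ∧ fhat.comp i = f)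
    (p : ℕ) (hp : p.Prime) (k : ℕ) :
    (∃ U : Subgroup Hhat, U.Normal ∧ IsOpen (U : Set Hhat) ∧ p ^ k ∣ U.index) ↔
    (∃ U : Subgroup H, U.Normal ∧ IsOpen (U : Set H) ∧ p ^ k ∣ U.index) := by
  constructor
  · rintro ⟨U, hUn, hUo, hUk⟩
    have hindex : (U.comap i).index = U.index := U.index_comap_of_denseRange hdense hUo
    have : Finite (Hhat ⧸ U) := U.quotient_finite_of_isOpen hUo
    have : (U.comap i).FiniteIndex := ⟨hindex ▸ Subgroup.index_ne_zero_of_finite⟩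
    obtain ⟨V, hV⟩ := (U.comap i).exists_openNormalSubgroup_pow_dvd_index hp (hindex ▸ hUk)
    exact ⟨V, V.isNormal', V.isOpen', hV⟩
  · rintro ⟨U, hUn, hUo, hUk⟩
    let _ : TopologicalSpace (H ⧸ U) := ⊥
    have : DiscreteTopology (H ⧸ U) := ⟨rfl⟩
    have : Finite (H ⧸ U) := U.quotient_finite_of_isOpen hUo
    obtain ⟨f, ⟨hf, hfi⟩, -⟩ := huniv (H ⧸ U) (QuotientGroup.mk' U)
    have hsurj : Function.Surjective f :=
      .of_comp (g := i) (by rw [← MonoidHom.coe_comp, hfi]; exact QuotientGroup.mk'_surjective U)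
    refine ⟨f.ker, inferInstance, (isOpen_discrete {1}).preimage hf, ?_⟩
    rwa [MonoidHom.index_ker_of_surjective hsurj, ← Subgroup.index_eq_card]

/-- Let `H` be a profinite group with abstract profinite completion
`i : H →* Hhat`.  Then the supernatural order of `Hhat` equals that of `H`:
for every prime `p` and every `k`, `p^k` divides the index of some open normal
subgroup of `Hhat` if and only if it divides the index of some open normal subgroup
of `H`. -/
theorem stmt_14 {H : Type} [Group H] [TopologicalSpace H] [IsTopologicalGroup H]
    [CompactSpace H] [TotallyDisconnectedSpace H] [T2Space H]
    {Hhat : Type} [Group Hhat] [TopologicalSpace Hhat] [IsTopologicalGroup Hhat]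
    [CompactSpace Hhat] [TotallyDisconnectedSpace Hhat] [T2Space Hhat]
    (i : H →* Hhat) (hdense : DenseRange i)
    (huniv : ∀ (K : Type) [Group K] [Finite K] [TopologicalSpace K] [DiscreteTopology K]
      (f : H →* K), ∃! fhat : Hhat →* K, Continuous fhat ∧ fhat.comp i = f)
    (p : ℕ) (hp : p.Prime) (k : ℕ) :
    (∃ U : Subgroup Hhat, U.Normal ∧ IsOpen (U : Set Hhat) ∧ p ^ k ∣ U.index) ↔
    (∃ U : Subgroup H, U.Normal ∧ IsOpen (U : Set H) ∧ p ^ k ∣ U.index) :=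
  stmt_14_general i hdense huniv p hp k
end
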